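/- arXiv:1107.3320 — 4 statements merged into one kernel-verified Lean document; each statement's English description precedes it below -/
import Mathlib

section
/- Let σ be a toric monoid all of whose proper faces are smooth (i.e. freely generated by their extremals), and let 0 ≠ v ∈ σ. Then every monoid in the star subdivision S(σ,v) is smooth. In particular, if τ = ℤ≥0⟨v₁,…,v_k⟩ is freely generated by linearly independent v₁,…,v_k and v ∉ τ, then τ + ℤ≥0·v is freely generated by the linearly independent set {v₁,…,v_k, v}. -/
open scoped NNReal

namespace Toric

/-- The lattice `ℤ^n`. -/
abbrev L (n : ℕ) := Fin n → ℤ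

/-- Inclusion of the lattice into the real vector space. -/
def toReal {n : ℕ} (v : L n) : Fin n → ℝ := fun i => (v i : ℝ)

lemma toReal_zero {n : ℕ} : toReal (0 : L n) = 0 := by
  funext i; simp [toReal]

lemma toReal_add {n : ℕ} (v w : L n) : toReal (v + w) = toReal v + toReal w := by
  funext i; simp [toReal]

/-- The support of a monoid of lattice points: its non-negative real span,
viewed as a convex cone (an `ℝ≥0`-submodule). -/
noncomputable def supp {n : ℕ} (σ : AddSubmonoid (L n)) : Submodule ℝ≥0 (Fin n → ℝ) :=
  Submodule.span ℝ≥0 (toReal '' (σ : Set (L n)))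

/-- A toric monoid: a finitely generated, sharp, saturated submonoid of the
lattice `ℤ^n` (integrality and torsion-freeness are automatic for submonoids
of a lattice). -/
structure IsToric {n : ℕ} (σ : AddSubmonoid (L n)) : Prop where
  fg : σ.FG
  sharp : ∀ v ∈ σ, -v ∈ σ → v = 0
  saturated : ∀ v ∈ AddSubgroup.closure (σ : Set (L n)), ∀ k : ℕ, 0 < k → k • v ∈ σ → v ∈ σ

/-- `τ` is a face of `σ`: a submonoid such that `v + w ∈ τ` with `v, w ∈ σ`
implies `v, w ∈ τ`. -/
def IsFace {n : ℕ} (τ σ : AddSubmonoid (L n)) : Prop :=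
  τ ≤ σ ∧ ∀ v w : L n, v ∈ σ → w ∈ σ → v + w ∈ τ → v ∈ τ ∧ w ∈ τ

/-- A refinement of the monoid `σ`: a collection of submonoids of `σ`, closed
under passing to faces, such that the intersection of any two members is a
face of both, and whose supports cover the support of `σ`. -/
def IsRefinement {n : ℕ} (R : Set (AddSubmonoid (L n))) (σ : AddSubmonoid (L n)) : Prop :=
  (∀ σ' ∈ R, σ' ≤ σ) ∧
  (∀ σ' ∈ R, ∀ τ, IsFace τ σ' → τ ∈ R) ∧
  (∀ σ₁ ∈ R, ∀ σ₂ ∈ R, IsFace (σ₁ ⊓ σ₂) σ₁ ∧ IsFace (σ₁ ⊓ σ₂) σ₂) ∧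
  (⋃ σ' ∈ R, (supp σ' : Set (Fin n → ℝ))) = (supp σ : Set (Fin n → ℝ))

/-- A smooth (toric) monoid: freely generated by finitely many linearly
independent lattice vectors. -/
def IsSmooth {n : ℕ} (σ : AddSubmonoid (L n)) : Prop :=
  ∃ (k : ℕ) (b : Fin k → L n), LinearIndependent ℤ b ∧
    σ = AddSubmonoid.closure (Set.range b)

end Toric

namespace Toric

/-- The star subdivision of `σ` along `v`. -/
def starSub {n : ℕ} (σ : AddSubmonoid (L n)) (v : L n) : Set (AddSubmonoid (L n)) :=
  {τ | IsFace τ σ ∧ v ∉ τ} ∪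
  {ρ | ∃ τ, IsFace τ σ ∧ v ∉ τ ∧ ρ = τ ⊔ AddSubmonoid.closure {v}}

/-- If all proper faces of the toric monoid `σ` are smooth
and `0 ≠ v ∈ σ`, then every monoid of the star subdivision `S(σ,v)` is
smooth.  In particular, if `τ = ℤ≥0⟨v₁,…,v_k⟩` is a face of `σ` freely
generated by linearly independent `v₁,…,v_k` and `v ∉ τ`, then `τ + ℤ≥0·v`
is freely generated by the linearly independent family `{v₁,…,v_k,v}`. -/
theorem starSub_smooth {n : ℕ} (σ : AddSubmonoid (L n)) (v : L n)
    (hσ : IsToric σ) (hfaces : ∀ τ, IsFace τ σ → τ ≠ σ → IsSmooth τ)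
    (hv : v ∈ σ) (hv0 : v ≠ 0) :
    (∀ ρ ∈ starSub σ v, IsSmooth ρ) ∧
    (∀ (k : ℕ) (b : Fin k → L n) (τ : AddSubmonoid (L n)),
      IsFace τ σ → LinearIndependent ℤ b →
      τ = AddSubmonoid.closure (Set.range b) → v ∉ τ →
      LinearIndependent ℤ (Fin.snoc b v : Fin (k + 1) → L n) ∧
      τ ⊔ AddSubmonoid.closure {v}
        = AddSubmonoid.closure (Set.range (Fin.snoc b v : Fin (k + 1) → L n))) := by
  have key : ∀ (k : ℕ) (b : Fin k → L n) (τ : AddSubmonoid (L n)),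
      IsFace τ σ → LinearIndependent ℤ b →
      τ = AddSubmonoid.closure (Set.range b) → v ∉ τ →
      LinearIndependent ℤ (Fin.snoc b v : Fin (k + 1) → L n) ∧
      τ ⊔ AddSubmonoid.closure {v}
        = AddSubmonoid.closure (Set.range (Fin.snoc b v : Fin (k + 1) → L n)) := by
    intro k b τ hface hb hτ hvτ
    have hbτ : ∀ i, b i ∈ τ := by
      intro i; rw [hτ]; exact AddSubmonoid.subset_closure ⟨i, rfl⟩
    -- no positive multiple of v lies in τ
    have hmul : ∀ m : ℕ, 0 < m → m • v ∈ τ → False := by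
      intro m hm hmem
      obtain ⟨j, rfl⟩ := Nat.exists_eq_add_of_lt hm
      apply hvτ
      have hsum : (j : ℕ) • v + v ∈ τ := by
        have : (0 + j + 1) • v = (j : ℕ) • v + v := by
          rw [succ_nsmul]; ring_nf
        rwa [this] at hmem
      exact (hface.2 ((j : ℕ) • v) v (AddSubmonoid.nsmul_mem σ hv _) hv hsum).2
    constructor
    · rw [Fintype.linearIndependent_iff]
      intro g hg
      have hsum : (∑ i : Fin k, g i.castSucc • b i) + g (Fin.last k) • v = 0 := by
        rw [← hg, Fin.sum_univ_castSucc]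
        simp
      by_cases hc : g (Fin.last k) = 0
      · have h0 : ∑ i : Fin k, g i.castSucc • b i = 0 := by
          simpa [hc] using hsum
        have hz := Fintype.linearIndependent_iff.mp hb (fun i => g i.castSucc) h0
        intro i
        rcases Fin.eq_castSucc_or_eq_last i with ⟨j, rfl⟩ | rfl
        · exact hz j
        · exact hc
      · exfalso
        set c := g (Fin.last k) with hcdef
        set a : Fin k → ℤ := fun i => g i.castSucc with hadef
        -- define signed coefficients so that |c| • v = ∑ d i • b i
        set d : Fin k → ℤ := fun i => if 0 ≤ c then -a i else a i with hddef
        have hm0 : 0 < c.natAbs := Int.natAbs_pos.mpr hc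
        have hcv : (c.natAbs : ℤ) • v = ∑ i : Fin k, d i • b i := by
          have hc' : c • v = -∑ i : Fin k, a i • b i := by
            rw [eq_neg_iff_add_eq_zero, add_comm]; exact hsum
          by_cases h : 0 ≤ c
          · rw [Int.natAbs_of_nonneg h, hc', neg_eq_iff_eq_neg, ← Finset.sum_neg_distrib]
            simp only [hddef, if_pos h, neg_smul, neg_neg]
          · have : (c.natAbs : ℤ) = -c := by omega
            rw [this, neg_smul, hc', neg_neg]
            simp only [hddef, if_neg h]
        -- split into positive and negative parts
        have hkey : (c.natAbs : ℤ) • v + ∑ i : Fin k, ((-(d i)).toNat : ℤ) • b i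
            = ∑ i : Fin k, ((d i).toNat : ℤ) • b i := by
          have hsplit : ∑ i : Fin k, ((d i).toNat : ℤ) • b i
              - ∑ i : Fin k, ((-(d i)).toNat : ℤ) • b i = ∑ i : Fin k, d i • b i := by
            rw [← Finset.sum_sub_distrib]
            refine Finset.sum_congr rfl fun i _ => ?_
            rw [← sub_smul]
            congr 1
            omega
          rw [hcv, ← hsplit]; abel
        have hP : (∑ i : Fin k, ((d i).toNat : ℤ) • b i) ∈ τ := by
          refine AddSubmonoid.sum_mem τ fun i _ => ?_
          rw [natCast_zsmul]
          exact AddSubmonoid.nsmul_mem τ (hbτ i) _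
        have hN : (∑ i : Fin k, ((-(d i)).toNat : ℤ) • b i) ∈ τ := by
          refine AddSubmonoid.sum_mem τ fun i _ => ?_
          rw [natCast_zsmul]
          exact AddSubmonoid.nsmul_mem τ (hbτ i) _
        have hvσ : (c.natAbs : ℤ) • v ∈ σ := by
          rw [natCast_zsmul]; exact AddSubmonoid.nsmul_mem σ hv _
        have hNσ : (∑ i : Fin k, ((-(d i)).toNat : ℤ) • b i) ∈ σ := hface.1 hN
        have hmem : (c.natAbs : ℤ) • v ∈ τ :=
          (hface.2 _ _ hvσ hNσ (by rw [hkey]; exact hP)).1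
        rw [natCast_zsmul] at hmem
        exact hmul c.natAbs hm0 hmem
    · have hrange : Set.range (Fin.snoc b v : Fin (k + 1) → L n)
          = Set.range b ∪ {v} := by
        ext x
        constructor
        · rintro ⟨i, rfl⟩
          rcases Fin.eq_castSucc_or_eq_last i with ⟨j, rfl⟩ | rfl
          · exact Or.inl ⟨j, by simp⟩
          · exact Or.inr (by simp)
        · rintro (⟨j, rfl⟩ | rfl)
          · exact ⟨j.castSucc, by simp⟩
          · exact ⟨Fin.last k, by simp⟩
      rw [hrange, AddSubmonoid.closure_union, hτ]
  refine ⟨?_, key⟩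
  rintro ρ (⟨hface, hvρ⟩ | ⟨τ, hface, hvτ, rfl⟩)
  · exact hfaces ρ hface (fun h => hvρ (h ▸ hv))
  · obtain ⟨k, b, hb, hτ⟩ := hfaces τ hface (fun h => hvτ (h ▸ hv))
    obtain ⟨h1, h2⟩ := key k b τ hface hb hτ hvτ
    exact ⟨k + 1, Fin.snoc b v, h1, h2⟩

end Toric
end

section
/- Let σ be a smooth toric monoid, M an integral subspace of N_σ⊗ℝ, μ = σ ∩ M, and Λ the set of maximal faces of σ meeting μ trivially. Then σ = ⋃_{τ∈Λ} μ∗τ, where μ∗τ = σ ∩ (supp(μ) + supp(τ)) is the join. -/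
open scoped NNReal

namespace Toric

/-- The submonoid `σ ∩ M` of lattice points of `σ` lying in a real subspace `M`. -/
def interSubspace {n : ℕ} (σ : AddSubmonoid (L n)) (M : Submodule ℝ (Fin n → ℝ)) :
    AddSubmonoid (L n) where
  carrier := {v | v ∈ σ ∧ toReal v ∈ M}
  zero_mem' := ⟨σ.zero_mem, by rw [toReal_zero]; exact M.zero_mem⟩
  add_mem' := by
    rintro a b ⟨ha, ha'⟩ ⟨hb, hb'⟩
    exact ⟨σ.add_mem ha hb, by rw [toReal_add]; exact M.add_mem ha' hb'⟩

/-- An integral subspace: a real subspace spanned by lattice vectors. -/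
def IsIntegralSubspace {n : ℕ} (M : Submodule ℝ (Fin n → ℝ)) : Prop :=
  ∃ S : Set (L n), M = Submodule.span ℝ (toReal '' S)

/-- `τ` is a maximal face of `σ` meeting `μ` trivially. -/
def IsMaxTrivFace {n : ℕ} (σ μ τ : AddSubmonoid (L n)) : Prop :=
  IsFace τ σ ∧ τ ⊓ μ = ⊥ ∧
  ∀ τ', IsFace τ' σ → τ ≤ τ' → τ' ⊓ μ = ⊥ → τ' = τ

/-- The join `μ ∗ τ` of two submonoids of `σ`: the lattice points of `σ`
lying in the Minkowski sum `supp μ + supp τ` of the supports. -/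
noncomputable def join {n : ℕ} (σ μ τ : AddSubmonoid (L n)) : AddSubmonoid (L n) where
  carrier := {v | v ∈ σ ∧ toReal v ∈ (supp μ ⊔ supp τ : Submodule ℝ≥0 (Fin n → ℝ))}
  zero_mem' := ⟨σ.zero_mem, by rw [toReal_zero]; exact Submodule.zero_mem _⟩
  add_mem' := by
    rintro a b ⟨ha, ha'⟩ ⟨hb, hb'⟩
    exact ⟨σ.add_mem ha hb, by rw [toReal_add]; exact Submodule.add_mem _ ha' hb'⟩

end Toric


/-!
Write `σ` as the free monoid on a basis `b`, so that its faces are exactly the submonoids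
generated by subsets of `b`. Given `v = ∑ aᵢ bᵢ ∈ σ`, repeatedly look at the face spanned by
the current support of the coefficients: if it contains a nonzero `w ∈ μ`, subtract the
largest multiple `ε w` keeping all coefficients nonnegative, which moves `ε w` into `supp μ`
and kills at least one coefficient. When this stops, `v` lies in `supp μ + supp τ₀` for a face
`τ₀` meeting `μ` trivially, and any maximal such face `τ ⊇ τ₀` has `v ∈ μ ∗ τ`.
-/

open Function

namespace Toric

lemma mem_closure_image_iff {ι M : Type*} [Fintype ι] [AddCommMonoid M] {b : ι → M}
    {I : Set ι} {v : M} :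
    v ∈ AddSubmonoid.closure (b '' I) ↔ ∃ a : ι → ℕ, support a ⊆ I ∧ v = ∑ i, a i • b i := by
  classical
  constructor
  · intro hv
    induction hv using AddSubmonoid.closure_induction with
    | mem x hx =>
      obtain ⟨i, hi, rfl⟩ := hx
      exact ⟨Pi.single i 1, Pi.support_single_subset.trans (Set.singleton_subset_iff.mpr hi),
        by simp [Pi.single_apply]⟩
    | zero => exact ⟨0, by simp, by simp⟩
    | add x y _ _ ihx ihy =>
      obtain ⟨ax, hax, rfl⟩ := ihx
      obtain ⟨ay, hay, rfl⟩ := ihy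
      exact ⟨ax + ay, (support_add _ _).trans (Set.union_subset hax hay),
        by simp [add_smul, Finset.sum_add_distrib]⟩
  · rintro ⟨a, ha, rfl⟩
    refine AddSubmonoid.sum_mem _ fun i _ => ?_
    by_cases hi : a i = 0
    · simp [hi]
    · exact nsmul_mem (AddSubmonoid.subset_closure (Set.mem_image_of_mem b (ha hi))) _

lemma exists_support_sub_smul_ssubset {ι : Type*} [Fintype ι] {d a : ι → ℝ≥0} (ha : a ≠ 0)
    (had : support a ⊆ support d) :
    ∃ (ε : ℝ≥0) (d' : ι → ℝ≥0), d = d' + ε • a ∧ support d' ⊂ support d := by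
  classical
  have hT : (Finset.univ.filter (a · ≠ 0)).Nonempty := by
    obtain ⟨i, hi⟩ := Function.ne_iff.mp ha
    exact ⟨i, by simpa using hi⟩
  obtain ⟨i₀, hi₀, hmin⟩ :=
    (Finset.univ.filter (a · ≠ 0)).exists_min_image (fun i => d i / a i) hT
  simp only [Finset.mem_filter, Finset.mem_univ, true_and] at hi₀ hmin
  -- the largest step keeping `d - ε • a` nonnegative; it kills the coordinate `i₀`
  set ε := d i₀ / a i₀
  have hle : ε • a ≤ d := fun i => by
    by_cases hi : a i = 0
    · simp [hi]
    · exact (le_div_iff₀ (pos_iff_ne_zero.mpr hi)).mp (hmin i hi)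
  have hsub : support (d - ε • a) ⊆ support d := fun i hi h => hi (by simp [h])
  refine ⟨ε, d - ε • a, (tsub_add_cancel_of_le hle).symm,
    (Set.ssubset_iff_of_subset hsub).mpr ⟨i₀, had hi₀, ?_⟩⟩
  simp [ε, div_mul_cancel₀ _ hi₀]

variable {n : ℕ}

lemma mem_supp_of_mem {τ : AddSubmonoid (L n)} {v : L n} (hv : v ∈ τ) : toReal v ∈ supp τ :=
  Submodule.subset_span ⟨v, hv, rfl⟩

section Basis

variable {ι : Type*} [Fintype ι] {b : ι → L n}

lemma toReal_sum_nsmul (a : ι → ℕ) :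
    toReal (∑ i, a i • b i) = ∑ i, (a i : ℝ≥0) • toReal (b i) := by
  funext j
  simp [toReal, NNReal.smul_def]

lemma sum_smul_mem_supp_closure_image {J : Set ι} {e : ι → ℝ≥0} (he : support e ⊆ J) :
    ∑ i, e i • toReal (b i) ∈ supp (AddSubmonoid.closure (b '' J)) := by
  refine Submodule.sum_mem _ fun i _ => ?_
  by_cases hi : e i = 0
  · simp [hi]
  · exact Submodule.smul_mem _ _ (mem_supp_of_mem (AddSubmonoid.subset_closure ⟨i, he hi, rfl⟩))

lemma sum_nsmul_injective (hb : LinearIndependent ℤ b) :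
    Injective fun a : ι → ℕ => ∑ i, a i • b i := by
  intro a a' h
  funext i
  have := Fintype.linearIndependent_iff.mp hb (fun i => (a i : ℤ) - a' i)
    (by simpa [sub_smul, Finset.sum_sub_distrib, sub_eq_zero] using h) i
  omega

lemma isFace_closure_image (hb : LinearIndependent ℤ b) (I : Set ι) :
    IsFace (AddSubmonoid.closure (b '' I)) (AddSubmonoid.closure (Set.range b)) := by
  refine ⟨AddSubmonoid.closure_mono (Set.image_subset_range _ _), fun v w hv hw hvw => ?_⟩
  obtain ⟨av, rfl⟩ := AddSubmonoid.mem_closure_range_iff_of_fintype.mp hv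
  obtain ⟨aw, rfl⟩ := AddSubmonoid.mem_closure_range_iff_of_fintype.mp hw
  obtain ⟨a, ha, hsum⟩ := mem_closure_image_iff.mp hvw
  have hcoord : av + aw = a :=
    sum_nsmul_injective hb (by simpa [add_smul, Finset.sum_add_distrib] using hsum)
  have hsupp : support av ∪ support aw ⊆ I := fun i hi =>
    ha (show a i ≠ 0 by rw [← hcoord]; simp only [Set.mem_union, mem_support] at hi; simp; omega)
  exact ⟨mem_closure_image_iff.mpr ⟨av, Set.subset_union_left.trans hsupp, rfl⟩,
    mem_closure_image_iff.mpr ⟨aw, Set.subset_union_right.trans hsupp, rfl⟩⟩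

lemma IsFace.mem_of_coeff_ne_zero {τ : AddSubmonoid (L n)}
    (hτ : IsFace τ (AddSubmonoid.closure (Set.range b))) {a : ι → ℕ}
    (ha : ∑ j, a j • b j ∈ τ) {i : ι} (hi : a i ≠ 0) : b i ∈ τ := by
  classical
  have hmem : ∀ j (m : ℕ), m • b j ∈ AddSubmonoid.closure (Set.range b) := fun j m =>
    nsmul_mem (AddSubmonoid.subset_closure (Set.mem_range_self j)) m
  rw [← Finset.add_sum_erase _ _ (Finset.mem_univ i)] at ha
  have hai := (hτ.2 _ _ (hmem i _) (AddSubmonoid.sum_mem _ fun j _ => hmem j _) ha).1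
  obtain ⟨m, hm⟩ := Nat.exists_eq_succ_of_ne_zero hi
  rw [hm, succ_nsmul'] at hai
  exact (hτ.2 _ _ (AddSubmonoid.subset_closure ⟨i, rfl⟩) (hmem i m) hai).1

lemma IsFace.eq_closure_image {τ : AddSubmonoid (L n)}
    (hτ : IsFace τ (AddSubmonoid.closure (Set.range b))) :
    τ = AddSubmonoid.closure (b '' {i | b i ∈ τ}) := by
  refine le_antisymm (fun v hv => ?_) (AddSubmonoid.closure_le.mpr ?_)
  · obtain ⟨a, rfl⟩ := AddSubmonoid.mem_closure_range_iff_of_fintype.mp (hτ.1 hv)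
    exact mem_closure_image_iff.mpr ⟨a, fun i hi => hτ.mem_of_coeff_ne_zero hv hi, rfl⟩
  · rintro _ ⟨i, hi, rfl⟩
    exact hi

lemma isMaxTrivFace_closure_image (hb : LinearIndependent ℤ b) (μ : AddSubmonoid (L n))
    {J : Set ι} (hJ : Maximal (fun I => AddSubmonoid.closure (b '' I) ⊓ μ = ⊥) J) :
    IsMaxTrivFace (AddSubmonoid.closure (Set.range b)) μ (AddSubmonoid.closure (b '' J)) := by
  refine ⟨isFace_closure_image hb J, hJ.prop, fun τ hτ hle hτμ => ?_⟩
  have hτeq := hτ.eq_closure_image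
  have hJτ : J ⊆ {i | b i ∈ τ} := fun i hi => hle (AddSubmonoid.subset_closure ⟨i, hi, rfl⟩)
  rw [hτeq, hJ.eq_of_subset (hτeq ▸ hτμ) hJτ]

lemma exists_add_eq_sum_smul_mem_supp_inf_eq_bot (b : ι → L n) (μ : AddSubmonoid (L n))
    (d : ι → ℝ≥0) :
    ∃ c e : ι → ℝ≥0, c + e = d ∧ ∑ i, c i • toReal (b i) ∈ supp μ ∧
      AddSubmonoid.closure (b '' support e) ⊓ μ = ⊥ := by
  induction hs : support d using WellFoundedLT.induction generalizing d with
  | _ s ih =>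
    by_cases htriv : AddSubmonoid.closure (b '' support d) ⊓ μ = ⊥
    · exact ⟨0, d, zero_add d, by simp, htriv⟩
    obtain ⟨w, hw, hw0⟩ := (AddSubmonoid.bot_or_exists_ne_zero _).resolve_left htriv
    obtain ⟨hwd, hwμ⟩ := AddSubmonoid.mem_inf.mp hw
    obtain ⟨a, ha, rfl⟩ := mem_closure_image_iff.mp hwd
    have ha0 : (fun i => (a i : ℝ≥0)) ≠ 0 := fun h =>
      hw0 (by simp [show ∀ i, a i = 0 from fun i => by simpa using congrFun h i])
    obtain ⟨ε, d', rfl, hd'⟩ :=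
      exists_support_sub_smul_ssubset ha0 fun i hi => ha (by simpa using hi)
    obtain ⟨c, e, rfl, hc, he⟩ := ih _ (hs ▸ hd') d' rfl
    refine ⟨c + ε • fun i => (a i : ℝ≥0), e, add_right_comm _ _ _, ?_, he⟩
    simp only [Pi.add_apply, Pi.smul_apply, add_smul, Finset.sum_add_distrib, smul_eq_mul,
      mul_smul, ← Finset.smul_sum, ← toReal_sum_nsmul]
    exact Submodule.add_mem _ hc (Submodule.smul_mem _ _ (mem_supp_of_mem hwμ))

theorem exists_isMaxTrivFace_mem_join (hb : LinearIndependent ℤ b) (μ : AddSubmonoid (L n))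
    {v : L n} (hv : v ∈ AddSubmonoid.closure (Set.range b)) :
    ∃ τ, IsMaxTrivFace (AddSubmonoid.closure (Set.range b)) μ τ ∧
      v ∈ join (AddSubmonoid.closure (Set.range b)) μ τ := by
  obtain ⟨a, rfl⟩ := AddSubmonoid.mem_closure_range_iff_of_fintype.mp hv
  obtain ⟨c, e, hce, hc, he⟩ := exists_add_eq_sum_smul_mem_supp_inf_eq_bot b μ (a ·)
  obtain ⟨J, heJ, hJ⟩ :=
    Finite.exists_le_maximal (p := fun I => AddSubmonoid.closure (b '' I) ⊓ μ = ⊥) he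
  refine ⟨_, isMaxTrivFace_closure_image hb μ hJ, hv, ?_⟩
  show toReal _ ∈ supp μ ⊔ supp _
  have hcoeff : ∀ i, (a i : ℝ≥0) = c i + e i := fun i => (congrFun hce i).symm
  simp only [toReal_sum_nsmul, hcoeff, add_smul, Finset.sum_add_distrib]
  exact Submodule.add_mem_sup hc (sum_smul_mem_supp_closure_image heJ)

end Basis

theorem planar_cover_general {n : ℕ} (σ : AddSubmonoid (L n))
    (M : Submodule ℝ (Fin n → ℝ)) (hsm : IsSmooth σ) :
    ∀ v : L n, v ∈ σ ↔
      ∃ τ, IsMaxTrivFace σ (interSubspace σ M) τ ∧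
        v ∈ join σ (interSubspace σ M) τ := by
  obtain ⟨k, b, hb, rfl⟩ := hsm
  exact fun v => ⟨exists_isMaxTrivFace_mem_join hb _, fun ⟨_, _, h⟩ => h.1⟩

/-- For a smooth toric monoid `σ` and `μ = σ ∩ M` the
intersection with an integral subspace, `σ` is the union of the joins
`μ ∗ τ` over the maximal faces `τ` of `σ` meeting `μ` trivially. -/
theorem planar_cover {n : ℕ} (σ : AddSubmonoid (L n))
    (M : Submodule ℝ (Fin n → ℝ)) (hσ : IsToric σ) (hsm : IsSmooth σ)
    (hM : IsIntegralSubspace M) :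
    ∀ v : L n, v ∈ σ ↔
      ∃ τ, IsMaxTrivFace σ (interSubspace σ M) τ ∧
        v ∈ join σ (interSubspace σ M) τ :=
  planar_cover_general σ M hsm

end Toric
end

section
/- A submonoid τ of a toric monoid σ is a face if and only if there exists a linear functional u on the group completion of σ taking non-negative integer values on σ such that ⟨u,v⟩ = 0 for v ∈ τ and ⟨u,v⟩ > 0 for v ∈ σ \ τ. -/
open scoped NNReal

/-!
If `u ≥ 0` on `σ` vanishes exactly on `τ`, then `u v + u w = 0` forces `u v = u w = 0`, so `τ` is
a face. Conversely, let the finite set `S` generate `σ` and let `x ∉ τ` be a generator. No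
positive multiple of `-x` lies in the cone spanned by `S ∪ -(S ∩ τ)`: otherwise a positive
multiple of `x` plus an element of `σ` would lie in `τ`. Farkas' lemma, in a form valid over any
linearly ordered commutative ring and hence directly over `ℤ`, gives an integral functional that
is `≥ 0` on `S`, zero on `S ∩ τ` and positive at `x`. The sum of these functionals over all
generators outside `τ` is `≥ 0` on `S` and vanishes exactly on `S ∩ τ`, and the face property
propagates this from `S` to `σ`.
-/

namespace PointedCone

variable {R M : Type*} [CommRing R] [AddCommGroup M] [Module R M]

/-- Projection along `x` onto the kernel of `f`, scaled by `-f x` to avoid dividing by `f x`. -/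
def projAlong (f : Module.Dual R M) (x : M) : M →ₗ[R] M :=
  (-f x) • LinearMap.id + f.smulRight x

lemma projAlong_apply (f : Module.Dual R M) (x z : M) :
    projAlong f x z = (-f x) • z + f z • x := rfl

lemma projAlong_apply_self (f : Module.Dual R M) (x : M) : projAlong f x x = 0 := by
  simp [projAlong_apply]

variable [LinearOrder R] [IsStrictOrderedRing R]

lemma nonneg_of_mem_hull {f : Module.Dual R M} {s : Set M} (hs : ∀ x ∈ s, 0 ≤ f x) {z : M}
    (hz : z ∈ hull R s) : 0 ≤ f z :=
  (Submodule.span_le.2 hs : hull R s ≤ (positive R R).comap f) hz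

lemma smul_mem_hull_insert_of_smul_projAlong_mem {f : Module.Dual R M} {t : Set M}
    (hft : ∀ z ∈ t, 0 ≤ f z) {x y : M} (hfx : f x < 0) (hfy : f y < 0) {c : R} (hc : 0 < c)
    (hmem : c • projAlong f x y ∈ hull R (projAlong f x '' t)) :
    ((-f x) * c) • y ∈ hull R (insert x t) := by
  obtain ⟨z, hz, hzy⟩ : ∃ z ∈ hull R t, projAlong f x z = c • projAlong f x y :=
    (Submodule.span_image ((projAlong f x).restrictScalars {c : R // 0 ≤ c})).le hmem
  have hfz : 0 ≤ f z := nonneg_of_mem_hull hft hz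
  have hmul : ((-f x) * c) • y = (-f x) • z + (f z - c * f y) • x := by
    rw [projAlong_apply, projAlong_apply] at hzy
    linear_combination (norm := module) -hzy
  rw [hmul]
  exact add_mem
    (smul_mem _ (neg_nonneg.2 hfx.le) (Submodule.span_mono (Set.subset_insert _ _) hz))
    (smul_mem _ (by nlinarith) (subset_hull (Set.mem_insert _ _)))

theorem exists_dual_of_forall_smul_notMem_hull [Module.Projective R M] (s : Finset M) {y : M}
    (hy : ∀ c : R, 0 < c → c • y ∉ hull R (s : Set M)) :
    ∃ f : Module.Dual R M, (∀ x ∈ s, 0 ≤ f x) ∧ f y < 0 := by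
  classical
  induction hk : s.card using Nat.strong_induction_on generalizing s y with
  | _ k ih =>
  subst hk
  rcases s.eq_empty_or_nonempty with rfl | ⟨x, hx⟩
  · have hy0 : y ≠ 0 := by simpa using hy 1 one_pos
    obtain ⟨f, hf⟩ := Module.Projective.exists_dual_ne_zero R hy0
    rcases hf.lt_or_gt with hneg | hpos
    · exact ⟨f, by simp, hneg⟩
    · exact ⟨-f, by simp, by simpa using hpos⟩
  set t := s.erase x
  have hts : t.card < s.card := Finset.card_erase_lt_of_mem hx
  have hs : (s : Set M) = insert x (t : Set M) := by
    rw [← Finset.coe_insert, Finset.insert_erase hx]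
  obtain ⟨f, hft, hfy⟩ := ih _ hts t
    (fun c hc hmem => hy c hc (Submodule.span_mono (by simp [t]) hmem)) rfl
  by_cases hfx : 0 ≤ f x
  · refine ⟨f, fun z hz => ?_, hfy⟩
    rcases eq_or_ne z x with rfl | hzx
    · exact hfx
    · exact hft z (Finset.mem_erase.2 ⟨hzx, hz⟩)
  push Not at hfx
  obtain ⟨g, hgt, hgy⟩ := ih _ (Finset.card_image_le.trans_lt hts) (t.image (projAlong f x))
    (fun c hc hmem => hy _ (mul_pos (neg_pos.2 hfx) hc) <| hs ▸
      smul_mem_hull_insert_of_smul_projAlong_mem hft hfx hfy hc (by simpa using hmem)) rfl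
  refine ⟨g ∘ₗ projAlong f x, fun z hz => ?_, hgy⟩
  rcases eq_or_ne z x with rfl | hzx
  · simp [projAlong_apply_self]
  · exact hgt _ (Finset.mem_image_of_mem _ (Finset.mem_erase.2 ⟨hzx, hz⟩))

lemma mem_hull_int_iff {G : Type*} [AddCommGroup G] {s : Set G} {x : G} :
    x ∈ hull ℤ s ↔ x ∈ AddSubmonoid.closure s := by
  constructor
  · intro hx
    induction hx using Submodule.span_induction with
    | mem z hz => exact AddSubmonoid.subset_closure hz
    | zero => exact zero_mem _
    | add z w _ _ hz hw => exact add_mem hz hw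
    | smul a z _ hz =>
      obtain ⟨a, ha⟩ := a
      lift a to ℕ using ha
      rw [Nonneg.mk_smul, natCast_zsmul]
      exact nsmul_mem hz a
  · intro hx
    exact AddSubmonoid.closure_le.2 (subset_hull (R := ℤ)) hx

end PointedCone

namespace Toric

variable {n : ℕ} {σ τ : AddSubmonoid (L n)}

lemma IsFace.mem_of_nsmul_mem (hF : IsFace τ σ) {x : L n} (hx : x ∈ σ) {k : ℕ} (hk : 0 < k)
    (hkx : k • x ∈ τ) : x ∈ τ := by
  obtain ⟨j, rfl⟩ := Nat.exists_eq_add_of_lt hk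
  rw [zero_add, succ_nsmul] at hkx
  exact (hF.2 _ _ (nsmul_mem hx j) hx hkx).2

open PointedCone Pointwise in
lemma IsFace.exists_dual_of_notMem (hF : IsFace τ σ) {S : Finset (L n)}
    (hS : AddSubmonoid.closure (S : Set (L n)) = σ) {x : L n} (hx : x ∈ σ) (hxτ : x ∉ τ) :
    ∃ f : Module.Dual ℤ (L n), (∀ z ∈ S, 0 ≤ f z) ∧ (∀ z ∈ S, z ∈ τ → f z = 0) ∧ 0 < f x := by
  classical
  set T := S.filter (· ∈ τ)
  have hsep : ∀ c : ℤ, 0 < c → c • -x ∉ hull ℤ (↑(S ∪ T.image Neg.neg) : Set (L n)) := by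
    intro c hc hmem
    rw [Finset.coe_union, Finset.coe_image, Set.image_neg_eq_neg, mem_hull_int_iff,
      AddSubmonoid.closure_union, AddSubmonoid.closure_neg, AddSubmonoid.mem_sup] at hmem
    obtain ⟨p, hp, q, hq, hpq⟩ := hmem
    rw [AddSubmonoid.mem_neg] at hq
    rw [hS] at hp
    have hqτ : -q ∈ τ := AddSubmonoid.closure_le.2 (fun z hz => (Finset.mem_filter.1 hz).2) hq
    lift c to ℕ using hc.le
    have hcx : c • x + p = -q := by
      rw [natCast_zsmul, smul_neg] at hpq
      rw [← neg_neg (c • x), ← hpq]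
      abel
    exact hxτ (hF.mem_of_nsmul_mem hx (by exact_mod_cast hc)
      (hF.2 _ _ (nsmul_mem hx c) hp (hcx ▸ hqτ)).1)
  obtain ⟨f, hf, hfx⟩ := exists_dual_of_forall_smul_notMem_hull _ hsep
  refine ⟨f, fun z hz => hf z (Finset.mem_union_left _ hz), fun z hz hzτ => ?_, ?_⟩
  · have hneg := hf (-z) (Finset.mem_union_right _ (Finset.mem_image_of_mem _
      (Finset.mem_filter.2 ⟨hz, hzτ⟩)))
    have hpos := hf z (Finset.mem_union_left _ hz)
    rw [map_neg] at hneg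
    omega
  · simpa using hfx

lemma IsFace.nonneg_and_eq_zero_iff_of_closure_eq (hF : IsFace τ σ) {S : Set (L n)}
    (hS : AddSubmonoid.closure S = σ) (u : Module.Dual ℤ (L n))
    (hu : ∀ z ∈ S, 0 ≤ u z ∧ (u z = 0 ↔ z ∈ τ)) :
    ∀ v ∈ σ, 0 ≤ u v ∧ (u v = 0 ↔ v ∈ τ) := by
  intro v hv
  rw [← hS] at hv
  induction hv using AddSubmonoid.closure_induction with
  | mem z hz => exact hu z hz
  | zero => simp [zero_mem]
  | add v w hv hw ihv ihw =>
    refine ⟨by rw [map_add]; exact add_nonneg ihv.1 ihw.1, ?_⟩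
    rw [map_add, add_eq_zero_iff_of_nonneg ihv.1 ihw.1, ihv.2, ihw.2]
    exact ⟨fun h => add_mem h.1 h.2, hF.2 v w (hS ▸ hv) (hS ▸ hw)⟩

lemma IsFace.exists_dual (hF : IsFace τ σ) (hσ : σ.FG) :
    ∃ u : Module.Dual ℤ (L n), ∀ v ∈ σ, 0 ≤ u v ∧ (u v = 0 ↔ v ∈ τ) := by
  classical
  obtain ⟨S, hS⟩ := hσ
  set X := S.filter (· ∉ τ)
  have hX : ∀ x ∈ X, x ∈ σ ∧ x ∉ τ := fun x hx =>
    ⟨hS ▸ AddSubmonoid.subset_closure (Finset.mem_filter.1 hx).1, (Finset.mem_filter.1 hx).2⟩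
  choose! f hf_nonneg hf_zero hf_pos using
    fun x hx => hF.exists_dual_of_notMem hS (hX x hx).1 (hX x hx).2
  refine ⟨∑ x ∈ X, f x, hF.nonneg_and_eq_zero_iff_of_closure_eq hS _ fun z hz => ?_⟩
  rw [LinearMap.sum_apply]
  have hnonneg : ∀ x ∈ X, 0 ≤ f x z := fun x hx => hf_nonneg x hx z hz
  refine ⟨Finset.sum_nonneg hnonneg, fun hsum => ?_, fun hzτ =>
    Finset.sum_eq_zero fun x hx => hf_zero x hx z hz hzτ⟩
  by_contra hzτ
  have hzX : z ∈ X := Finset.mem_filter.2 ⟨hz, hzτ⟩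
  exact (Finset.sum_pos' hnonneg ⟨z, hzX, hf_pos z hzX⟩).ne' hsum

/-- A submonoid `τ ≤ σ` of a toric monoid `σ` is a face if
and only if there is an integral linear functional `u` on the group
completion of `σ` taking non-negative values on `σ`, vanishing on `τ` and
strictly positive on `σ ∖ τ`. -/
theorem isFace_iff_functional {n : ℕ} (σ τ : AddSubmonoid (L n))
    (hσ : IsToric σ) (hτσ : τ ≤ σ) :
    IsFace τ σ ↔
      ∃ u : (AddSubgroup.closure (σ : Set (L n))) →ₗ[ℤ] ℤ,
        (∀ v, ∀ hv : v ∈ σ, 0 ≤ u ⟨v, AddSubgroup.subset_closure hv⟩) ∧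
        (∀ v, ∀ hv : v ∈ σ, v ∈ τ → u ⟨v, AddSubgroup.subset_closure hv⟩ = 0) ∧
        (∀ v, ∀ hv : v ∈ σ, v ∉ τ → 0 < u ⟨v, AddSubgroup.subset_closure hv⟩) := by
  constructor
  · intro hF
    obtain ⟨u, hu⟩ := hF.exists_dual hσ.fg
    exact ⟨u ∘ₗ (AddSubgroup.closure (σ : Set (L n))).subtype.toIntLinearMap,
      fun v hv => (hu v hv).1, fun v hv hvτ => (hu v hv).2.2 hvτ,
      fun v hv hvτ => (hu v hv).1.lt_of_ne fun h => hvτ ((hu v hv).2.1 h.symm)⟩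
  · rintro ⟨u, hu_nonneg, hu_zero, hu_pos⟩
    refine ⟨hτσ, fun v w hv hw hvw => ?_⟩
    have hsum : u ⟨v, AddSubgroup.subset_closure hv⟩ + u ⟨w, AddSubgroup.subset_closure hw⟩ = 0 :=
      by rw [← map_add]; exact hu_zero _ (add_mem hv hw) hvw
    have hmem : ∀ z (hz : z ∈ σ), u ⟨z, AddSubgroup.subset_closure hz⟩ ≤ 0 → z ∈ τ :=
      fun z hz hle => by_contra fun hzτ => (hu_pos z hz hzτ).not_ge hle
    exact ⟨hmem v hv (by linarith [hu_nonneg w hw]), hmem w hw (by linarith [hu_nonneg v hv])⟩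

end Toric
end

section
/- Let D ⊂ X be an interior binomial subvariety with local binomial structure given by exponent vectors γᵢ near a point p, and suppose all boundary hypersurfaces of the coordinate neighborhood pass through p. Then each γᵢ is either zero or indefinite (has at least one strictly positive and one strictly negative component). More generally, if D meets the interior of a boundary face F, then each γᵢ is zero or indefinite with respect to the hypersurfaces containing F. -/
open Set Filter

namespace Corners

/-- A local model of a manifold with corners: a relatively open subset `U`
of a model corner in `ℝ^ι`.  The coordinates in `bdy` are the boundary
defining coordinates (non-negative on `U`), and the coordinates in `zero`
are frozen (identically zero on `U`); the latter are used to realize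
boundary faces as corner models in the same ambient space. -/
structure CornerModel (ι : Type*) [Fintype ι] where
  bdy : Finset ι
  zero : Finset ι
  disj : Disjoint bdy zero
  U : Set (ι → ℝ)
  locallyOpen : ∃ W : Set (ι → ℝ), IsOpen W ∧
    U = W ∩ {x | (∀ i ∈ bdy, 0 ≤ x i) ∧ ∀ i ∈ zero, x i = 0}

variable {ι κ : Type*} [Fintype ι] [DecidableEq ι] [Fintype κ] [DecidableEq κ]

/-- The interior of a corner model: the points where all boundary
coordinates are strictly positive. -/
def CornerModel.int (M : CornerModel ι) : Set (ι → ℝ) :=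
  {x ∈ M.U | ∀ i ∈ M.bdy, 0 < x i}

/-- An (interior) b-map between corner models: a smooth map such that each
boundary coordinate function of the target pulls back to a positive smooth
multiple of a monomial in the boundary coordinates of the source. -/
structure BMap (M : CornerModel ι) (N : CornerModel κ) where
  toFun : (ι → ℝ) → (κ → ℝ)
  exp : ι → κ → ℕ
  coeff : κ → (ι → ℝ) → ℝ
  smooth : ContDiffOn ℝ (⊤ : ℕ∞) toFun M.U
  maps : Set.MapsTo toFun M.U N.U
  coeff_smooth : ∀ j, ContDiffOn ℝ (⊤ : ℕ∞) (coeff j) M.U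
  coeff_pos : ∀ j, ∀ x ∈ M.U, 0 < coeff j x
  exp_bdy : ∀ i j, i ∉ M.bdy → exp i j = 0
  eqn : ∀ j ∈ N.bdy, ∀ x ∈ M.U, toFun x j = coeff j x * ∏ i, x i ^ exp i j

/-- The matrix of the b-differential of a b-map in the canonical b-frames
`x_i ∂_{x_i}`, `∂_{y_j}`: the Jacobian conjugated by the boundary
coordinates.  On the interior this is smooth; the b-differential at a
boundary point is its limit from the interior (see `IsBDiffAt`). -/
noncomputable def bJac {M : CornerModel ι} {N : CornerModel κ} (F : BMap M N)
    (x : ι → ℝ) : κ → ι → ℝ := fun j i =>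
  (if i ∈ M.bdy then x i else 1) *
      fderivWithin ℝ (fun y => F.toFun y j) M.U x (Pi.single i 1) /
    (if j ∈ N.bdy then F.toFun x j else 1)

/-- `B` is the matrix of the b-differential of `F` at `p`: the continuous
extension from the interior of the conjugated Jacobian. -/
def IsBDiffAt {M : CornerModel ι} {N : CornerModel κ} (F : BMap M N)
    (p : ι → ℝ) (B : κ → ι → ℝ) : Prop :=
  Filter.Tendsto (bJac F) (nhdsWithin p M.int) (nhds B)

/-- Multiplication of a matrix and a vector (the linear map attached to a
b-differential matrix). -/
def mulVec (B : κ → ι → ℝ) (v : ι → ℝ) : κ → ℝ := fun j => ∑ i, B j i * v i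

/-- The boundary face of a corner model determined by a set `S` of boundary
coordinates. -/
def faceSet (M : CornerModel ι) (S : Finset ι) : Set (ι → ℝ) :=
  {x ∈ M.U | ∀ i ∈ S, x i = 0}

/-- The interior of the boundary face determined by `S`: the points whose
vanishing boundary coordinates are exactly those in `S`. -/
def faceInt (M : CornerModel ι) (S : Finset ι) : Set (ι → ℝ) :=
  {x ∈ M.U | ∀ i ∈ M.bdy, (x i = 0 ↔ i ∈ S)}

/-- The boundary face determined by `S`, as a corner model in its own
right. -/
def faceModel (M : CornerModel ι) (S : Finset ι) (hS : S ⊆ M.bdy) : CornerModel ι where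
  bdy := M.bdy \ S
  zero := M.zero ∪ S
  disj := by
    rw [Finset.disjoint_union_right]
    exact ⟨Finset.disjoint_of_subset_left (Finset.sdiff_subset) M.disj,
      Finset.sdiff_disjoint⟩
  U := faceSet M S
  locallyOpen := by
    obtain ⟨W, hW, hU⟩ := M.locallyOpen
    refine ⟨W, hW, ?_⟩
    ext x
    simp only [faceSet, hU, Set.mem_inter_iff, Set.mem_setOf_eq, Finset.mem_sdiff,
      Finset.mem_union]
    constructor
    · rintro ⟨⟨hxW, hb, hz⟩, hS0⟩
      exact ⟨hxW, fun i hi => hb i hi.1, fun i hi => hi.elim (hz i) (hS0 i)⟩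
    · rintro ⟨hxW, hb, hz⟩
      refine ⟨⟨hxW, fun i hi => ?_, fun i hi => hz i (Or.inl hi)⟩,
        fun i hi => hz i (Or.inr hi)⟩
      by_cases h : i ∈ S
      · exact le_of_eq (hz i (Or.inr h)).symm
      · exact hb i ⟨hi, h⟩

/-- The image face `f_#(F_S)`: the smallest boundary face of the target
containing the image of the face `F_S`, computed from the boundary
exponents. -/
def hashFace {M : CornerModel ι} {N : CornerModel κ} (F : BMap M N)
    (S : Finset ι) : Finset κ :=
  N.bdy.filter (fun j => ∃ i ∈ S, 0 < F.exp i j)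

lemma hashFace_subset {M : CornerModel ι} {N : CornerModel κ} (F : BMap M N)
    (S : Finset ι) : hashFace F S ⊆ N.bdy := Finset.filter_subset _ _

end Corners

namespace Corners

variable {ι : Type*} [Fintype ι] [DecidableEq ι]

/-- A relatively open subset of a corner model. -/
def RelOpenIn (M : CornerModel ι) (A : Set (ι → ℝ)) : Prop :=
  ∃ W : Set (ι → ℝ), IsOpen W ∧ A = W ∩ M.U

/-- The b-gradient (logarithmic differential in the b-frame) of the function
`c · x^γ` at `q`: the coefficients of `d log (c x^γ)` with respect to the
b-coframe `dx_i/x_i` (boundary coordinates), `dy_i` (others). -/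
noncomputable def bGrad (M : CornerModel ι) (c : (ι → ℝ) → ℝ) (γ : ι → ℤ)
    (q : ι → ℝ) : ι → ℝ := fun i =>
  if i ∈ M.bdy then (γ i : ℝ) + q i * fderivWithin ℝ c M.U q (Pi.single i 1) / c q
  else fderivWithin ℝ c M.U q (Pi.single i 1) / c q

/-- A local binomial structure for `D` on the relatively open set `A`:
finitely many functions of the form `c_s · x^{γ_s}` (with `c_s` smooth and
positive and `γ_s` an integer exponent vector in the boundary coordinates)
with everywhere linearly independent logarithmic differentials along
`D ∩ A`, such that `D ∩ A` is the closure of the interior solution set of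
the equations `c_s x^{γ_s} = 1`. -/
def LocalBinStructure (M : CornerModel ι) (D A : Set (ι → ℝ))
    (d : ℕ) (c : Fin d → (ι → ℝ) → ℝ) (γ : Fin d → ι → ℤ) : Prop :=
  (∀ s, ContDiffOn ℝ (⊤ : ℕ∞) (c s) M.U) ∧
  (∀ s, ∀ x ∈ M.U, 0 < c s x) ∧
  (∀ s, ∀ i, i ∉ M.bdy → γ s i = 0) ∧
  (∀ q ∈ D ∩ A, LinearIndependent ℝ (fun s => bGrad M (c s) (γ s) q)) ∧
  D ∩ A = closure {x ∈ A ∩ M.int | ∀ s, c s x * ∏ i, x i ^ γ s i = 1} ∩ A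

/-- An interior binomial subvariety of a corner model: a subset which is the
closure of its interior part and is covered by local binomial structures. -/
def IsIntBinVar (M : CornerModel ι) (D : Set (ι → ℝ)) : Prop :=
  D ⊆ M.U ∧ D = closure (D ∩ M.int) ∩ M.U ∧
  ∀ p ∈ D, ∃ A, RelOpenIn M A ∧ p ∈ A ∧
    ∃ d c γ, LocalBinStructure M D A d c γ

end Corners

namespace Corners

/-- Let `D` carry a local binomial structure with exponent
vectors `γ_s` on a relatively open set `A` of a corner model.  If all the
boundary hypersurfaces pass through a point `p ∈ D ∩ A` (all boundary
coordinates vanish at `p`), then each `γ_s` is zero or indefinite (has both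
a strictly positive and a strictly negative component among the boundary
coordinates).  More generally, if `D` meets the interior of the boundary
face indexed by `S`, then each `γ_s` is zero or indefinite with respect to
the hypersurfaces containing that face. -/
theorem binomial_exponents_zero_or_indefinite {ι : Type*} [Fintype ι] [DecidableEq ι]
    (M : CornerModel ι) (D A : Set (ι → ℝ)) (hA : RelOpenIn M A) (hD : D ⊆ M.U)
    (d : ℕ) (c : Fin d → (ι → ℝ) → ℝ) (γ : Fin d → ι → ℤ)
    (hstr : LocalBinStructure M D A d c γ) :
    ((∃ p ∈ D ∩ A, ∀ i ∈ M.bdy, p i = 0) →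
      ∀ s, (∀ i, γ s i = 0) ∨
        ((∃ i ∈ M.bdy, 0 < γ s i) ∧ (∃ i ∈ M.bdy, γ s i < 0))) ∧
    (∀ S : Finset ι, S ⊆ M.bdy → (D ∩ A ∩ faceInt M S).Nonempty →
      ∀ s, (∀ i ∈ S, γ s i = 0) ∨
        ((∃ i ∈ S, 0 < γ s i) ∧ (∃ i ∈ S, γ s i < 0))) := by
  obtain ⟨hc_sm, hc_pos, hγ_bdy, _hind, hclos⟩ := hstr
  set Z : Set (ι → ℝ) := {x ∈ A ∩ M.int | ∀ s, c s x * ∏ i, x i ^ γ s i = 1} with hZdef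
  have hZU : Z ⊆ M.U := fun x hx => hx.1.2.1
  -- the key auxiliary fact
  have key : ∀ (p : ι → ℝ), p ∈ closure Z → p ∈ M.U →
      ∀ (cv : (ι → ℝ) → ℝ) (γv : ι → ℤ),
      ContinuousWithinAt cv M.U p →
      (∀ x ∈ Z, cv x * ∏ i, x i ^ γv i = 1) →
      (∀ i, γv i < 0 → p i ≠ 0) →
      ∀ i0, p i0 = 0 → 0 < γv i0 → False := by
    intro p hpcl hpU cv γv hc hZeq hneg i0 h0 hpos
    have hprod : ContinuousWithinAt (fun x : ι → ℝ => ∏ i, x i ^ γv i) M.U p := by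
      apply tendsto_finset_prod
      intro i _
      have h1 : ContinuousAt (fun y : ℝ => y ^ γv i) (p i) :=
        continuousAt_zpow₀ _ _ (by
          by_cases h : γv i < 0
          · exact Or.inl (hneg i h)
          · exact Or.inr (not_lt.mp h))
      have h2 : ContinuousAt (fun x : ι → ℝ => x i) p := (continuous_apply i).continuousAt
      exact (ContinuousAt.comp (x := p) (g := fun y : ℝ => y ^ γv i) h1 h2).continuousWithinAt
    have hg : ContinuousWithinAt (fun x => cv x * ∏ i, x i ^ γv i) M.U p := hc.mul hprod
    have hne : (nhdsWithin p Z).NeBot := mem_closure_iff_nhdsWithin_neBot.mp hpcl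
    have T1 : Tendsto (fun x => cv x * ∏ i, x i ^ γv i) (nhdsWithin p Z)
        (nhds (cv p * ∏ i, p i ^ γv i)) := hg.mono hZU
    have T2 : Tendsto (fun x => cv x * ∏ i, x i ^ γv i) (nhdsWithin p Z) (nhds 1) := by
      refine Tendsto.congr' ?_ tendsto_const_nhds
      filter_upwards [self_mem_nhdsWithin] with x hx
      exact (hZeq x hx).symm
    have heq : cv p * ∏ i, p i ^ γv i = 1 := tendsto_nhds_unique T1 T2
    have hzero : (∏ i, p i ^ γv i) = 0 :=
      Finset.prod_eq_zero (Finset.mem_univ i0)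
        (by rw [h0]; exact zero_zpow _ (by omega))
    rw [hzero, mul_zero] at heq
    exact zero_ne_one heq
  -- the face statement
  have main : ∀ S : Finset ι, S ⊆ M.bdy → (D ∩ A ∩ faceInt M S).Nonempty →
      ∀ s, (∀ i ∈ S, γ s i = 0) ∨
        ((∃ i ∈ S, 0 < γ s i) ∧ (∃ i ∈ S, γ s i < 0)) := by
    rintro S hS ⟨p, hpDA, hpF⟩ s
    have hpU : p ∈ M.U := hD hpDA.1
    have hpcl : p ∈ closure Z := by
      have := hclos ▸ hpDA
      exact this.1
    have hface : ∀ i ∈ M.bdy, (p i = 0 ↔ i ∈ S) := hpF.2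
    by_contra hcon
    push_neg at hcon
    obtain ⟨⟨i1, hi1S, hi1ne⟩, h2⟩ := hcon
    by_cases hpose : ∃ i ∈ S, 0 < γ s i
    · -- then no negative entry, all γ s i ≥ 0 on S, and some positive
      have hnoneg : ∀ i ∈ S, 0 ≤ γ s i := by
        intro i hi
        have := h2 hpose
        by_contra h
        exact absurd (this i hi) (by omega)
      obtain ⟨i0, hi0S, hi0pos⟩ := hpose
      refine key p hpcl hpU (c s) (γ s)
        ((hc_sm s).continuousOn.continuousWithinAt hpU)
        (fun x hx => hx.2 s) ?_ i0 ((hface i0 (hS hi0S)).mpr hi0S) hi0pos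
      intro i hi
      by_cases hib : i ∈ M.bdy
      · intro h0
        have hiS : i ∈ S := (hface i hib).mp h0
        exact absurd (hnoneg i hiS) (not_le.mpr hi)
      · exact absurd (hγ_bdy s i hib) (by omega)
    · -- all γ s i ≤ 0 on S, some negative; apply key to inverses
      have hnonpos : ∀ i ∈ S, γ s i ≤ 0 := by
        intro i hi
        by_contra h
        exact hpose ⟨i, hi, not_le.mp h⟩
      have hi1neg : γ s i1 < 0 := lt_of_le_of_ne (hnonpos i1 hi1S) hi1ne
      refine key p hpcl hpU (fun x => (c s x)⁻¹) (fun i => -(γ s i))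
        (((hc_sm s).continuousOn.continuousWithinAt hpU).inv₀
          (ne_of_gt (hc_pos s p hpU))) ?_ ?_ i1
        ((hface i1 (hS hi1S)).mpr hi1S) (by omega)
      · intro x hx
        have hx2 := hx.2 s
        have : (∏ i, x i ^ (-(γ s i))) = (∏ i, x i ^ γ s i)⁻¹ := by
          rw [← Finset.prod_inv_distrib]
          exact Finset.prod_congr rfl fun i _ => zpow_neg _ _
        rw [this, ← mul_inv, hx2, inv_one]
      · intro i hi
        have hipos : 0 < γ s i := by
          omega
        by_cases hib : i ∈ M.bdy
        · intro h0
          have hiS : i ∈ S := (hface i hib).mp h0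
          exact absurd (hnonpos i hiS) (not_le.mpr hipos)
        · exact absurd (hγ_bdy s i hib) (by omega)
  refine ⟨?_, main⟩
  rintro ⟨p, hpDA, hp0⟩ s
  have hne : (D ∩ A ∩ faceInt M M.bdy).Nonempty := by
    refine ⟨p, hpDA, hD hpDA.1, fun i hi => ⟨fun _ => hi, fun _ => hp0 i hi⟩⟩
  rcases main M.bdy (le_refl _) hne s with h | h
  · left
    intro i
    by_cases hib : i ∈ M.bdy
    · exact h i hib
    · exact hγ_bdy s i hib
  · exact Or.inr h

end Corners
end
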